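/- arXiv:1106.1907 — 2 statements merged into one kernel-verified Lean document; each statement's English description precedes it below -/
import Mathlib

section
/- In U, with W = X3 + (s⁻² − r⁻¹s⁻¹)·X2·X4, the following identities hold: X1·W = r²s²·W·X1 + (1 − r⁻¹s)·X2²; X2·W = s²·W·X2; X3·W = W·X3; X4·W = s⁻²·W·X4. -/
set_option maxHeartbeats 2000000
set_option linter.unreachableTactic false
set_option linter.unusedVariables false


noncomputable section

namespace TwoParamB2

/-- The free algebra on two generators `e₁, e₂` over `ℂ`. -/
abbrev F : Type := FreeAlgebra ℂ (Fin 2)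

def g1 : F := FreeAlgebra.ι ℂ 0
def g2 : F := FreeAlgebra.ι ℂ 1

/-- The two-parameter quantum Serre relations defining `U = U_{r,s}^+(B₂)`. -/
inductive URel (r s : ℂ) : F → F → Prop
  | serre1 : URel r s (g1 * g1 * g2 + (r ^ 2 * s ^ 2) • (g2 * g1 * g1))
      ((r ^ 2 + s ^ 2) • (g1 * g2 * g1))
  | serre2 : URel r s
      (g1 * g2 ^ 3 + (r * s * (r ^ 2 + r * s + s ^ 2)) • (g2 ^ 2 * g1 * g2))
      ((r ^ 2 + r * s + s ^ 2) • (g2 * g1 * g2 ^ 2) + (r ^ 3 * s ^ 3) • (g2 ^ 3 * g1))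

/-- The algebra `U = U_{r,s}^+(B₂)`. -/
abbrev U (r s : ℂ) : Type := RingQuot (URel r s)

/-- The generator `e₁` of `U`. -/
def E1 (r s : ℂ) : U r s := RingQuot.mkAlgHom ℂ (URel r s) g1

/-- The generator `e₂` of `U`. -/
def E2 (r s : ℂ) : U r s := RingQuot.mkAlgHom ℂ (URel r s) g2

def X1 (r s : ℂ) : U r s := E1 r s

def X2 (r s : ℂ) : U r s := E1 r s * E2 r s - (r ^ 2) • (E2 r s * E1 r s)

def X3 (r s : ℂ) : U r s := E2 r s * X2 r s - (s ^ 2)⁻¹ • (X2 r s * E2 r s)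

def X4 (r s : ℂ) : U r s := E2 r s

/-- The element `W = X3 + (s⁻² − r⁻¹s⁻¹)·X2·X4`. -/
def W (r s : ℂ) : U r s := X3 r s + ((s ^ 2)⁻¹ - r⁻¹ * s⁻¹) • (X2 r s * X4 r s)

/-- polynomial form of `(r*s) • W` -/
def Wp (r s : ℂ) : U r s :=
  (r * s + r ^ 2) • (E2 r s * (E1 r s * E2 r s)) - E1 r s * (E2 r s * E2 r s)
    - (r ^ 3 * s) • (E2 r s * (E2 r s * E1 r s))

lemma rel1 (r s : ℂ) :
    E1 r s * (E1 r s * E2 r s) + (r ^ 2 * s ^ 2) • (E2 r s * (E1 r s * E1 r s))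
      = (r ^ 2 + s ^ 2) • (E1 r s * (E2 r s * E1 r s)) := by
  have h := RingQuot.mkAlgHom_rel ℂ (URel.serre1 (r := r) (s := s))
  simp only [map_add, map_smul, map_mul, mul_assoc] at h
  exact h

lemma rel2 (r s : ℂ) :
    E1 r s * (E2 r s * (E2 r s * E2 r s))
      + (r * s * (r ^ 2 + r * s + s ^ 2)) • (E2 r s * (E2 r s * (E1 r s * E2 r s)))
      = (r ^ 2 + r * s + s ^ 2) • (E2 r s * (E1 r s * (E2 r s * E2 r s)))
        + (r ^ 3 * s ^ 3) • (E2 r s * (E2 r s * (E2 r s * E1 r s))) := by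
  have h := RingQuot.mkAlgHom_rel ℂ (URel.serre2 (r := r) (s := s))
  simp only [map_add, map_smul, map_mul, map_pow, pow_succ, pow_zero, one_mul, mul_assoc] at h
  have e1 : (RingQuot.mkAlgHom ℂ (URel r s)) g1 = E1 r s := rfl
  have e2 : (RingQuot.mkAlgHom ℂ (URel r s)) g2 = E2 r s := rfl
  rw [e1, e2] at h
  linear_combination (norm := module) h

lemma hA0 (r s : ℂ) :
    E1 r s * (E1 r s * E2 r s)
      = (r ^ 2 + s ^ 2) • (E1 r s * (E2 r s * E1 r s))
        - (r ^ 2 * s ^ 2) • (E2 r s * (E1 r s * E1 r s)) := by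
  linear_combination (norm := module) rel1 r s

lemma hA' (r s : ℂ) (x : U r s) :
    E1 r s * (E1 r s * (E2 r s * x))
      = (r ^ 2 + s ^ 2) • (E1 r s * (E2 r s * (E1 r s * x)))
        - (r ^ 2 * s ^ 2) • (E2 r s * (E1 r s * (E1 r s * x))) := by
  have h := congrArg (· * x) (rel1 r s)
  simp only [add_mul, smul_mul_assoc, mul_assoc] at h
  linear_combination (norm := module) h

lemma hB0 (r s : ℂ) :
    E1 r s * (E2 r s * (E2 r s * E2 r s))
      = (r ^ 2 + r * s + s ^ 2) • (E2 r s * (E1 r s * (E2 r s * E2 r s)))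
        - (r * s * (r ^ 2 + r * s + s ^ 2)) • (E2 r s * (E2 r s * (E1 r s * E2 r s)))
        + (r ^ 3 * s ^ 3) • (E2 r s * (E2 r s * (E2 r s * E1 r s))) := by
  linear_combination (norm := module) rel2 r s

lemma hB' (r s : ℂ) (x : U r s) :
    E1 r s * (E2 r s * (E2 r s * (E2 r s * x)))
      = (r ^ 2 + r * s + s ^ 2) • (E2 r s * (E1 r s * (E2 r s * (E2 r s * x))))
        - (r * s * (r ^ 2 + r * s + s ^ 2)) • (E2 r s * (E2 r s * (E1 r s * (E2 r s * x))))
        + (r ^ 3 * s ^ 3) • (E2 r s * (E2 r s * (E2 r s * (E1 r s * x)))) := by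
  have h := congrArg (· * x) (rel2 r s)
  simp only [add_mul, smul_mul_assoc, mul_assoc] at h
  linear_combination (norm := module) h

lemma hC (r s : ℂ) (hr : r ≠ 0) (hs : s ≠ 0) :
    E1 r s * (E2 r s * (E1 r s * (E2 r s * E2 r s)))
      = (r ^ 2 + r * s + s ^ 2) • (E1 r s * (E2 r s * (E2 r s * (E1 r s * E2 r s))))
        - (r * s ^ 3 + r ^ 3 * s) • (E2 r s * (E1 r s * (E2 r s * (E1 r s * E2 r s))))
        - (r ^ 2 * s ^ 2 * (r ^ 2 + r * s + s ^ 2)) • (E2 r s * (E1 r s * (E2 r s * (E2 r s * E1 r s))))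
        + (2 * r ^ 3 * s ^ 5 + r ^ 4 * s ^ 4 + 2 * r ^ 5 * s ^ 3) • (E2 r s * (E2 r s * (E1 r s * (E2 r s * E1 r s))))
        - (2 * r ^ 5 * s ^ 5) • (E2 r s * (E2 r s * (E2 r s * (E1 r s * E1 r s)))) := by
  have k1 := hA' r s (E2 r s * E2 r s)
  rw [hA' r s (E2 r s)] at k1
  rw [hA0 r s] at k1
  have k3 := congrArg (E1 r s * ·) (hB0 r s)
  simp only [mul_sub, mul_add, mul_smul_comm] at k3
  rw [hB' r s (E1 r s)] at k3
  have k := k1.symm.trans k3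
  simp only [mul_add, mul_sub, add_mul, sub_mul, mul_smul_comm, smul_mul_assoc, smul_smul,
    smul_add, smul_sub, mul_assoc] at k
  linear_combination (norm := (match_scalars <;> (try field_simp; try ring_nf; try field_simp; try ring))) (-(r * s)⁻¹) • k

lemma L1 (r s : ℂ) (hr : r ≠ 0) (hs : s ≠ 0) :
    E1 r s * Wp r s = (r ^ 2 * s ^ 2) • (Wp r s * E1 r s) + (r * s - s ^ 2) • (X2 r s ^ 2) := by
  simp only [Wp, X2, pow_two, mul_add, add_mul, mul_sub, sub_mul, smul_add, smul_sub, smul_smul,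
    mul_smul_comm, smul_mul_assoc, mul_assoc, hA0, hA', hB0, hB', hC r s hr hs]
  match_scalars <;> ring1

lemma L2 (r s : ℂ) (hr : r ≠ 0) (hs : s ≠ 0) :
    X2 r s * Wp r s = (s ^ 2) • (Wp r s * X2 r s) := by
  simp only [Wp, X2, pow_two, mul_add, add_mul, mul_sub, sub_mul, smul_add, smul_sub, smul_smul,
    mul_smul_comm, smul_mul_assoc, mul_assoc, hA0, hA', hB0, hB', hC r s hr hs]
  match_scalars <;> ring1

lemma L4 (r s : ℂ) (hr : r ≠ 0) (hs : s ≠ 0) :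
    (s ^ 2) • (E2 r s * Wp r s) = Wp r s * E2 r s := by
  simp only [Wp, X2, pow_two, mul_add, add_mul, mul_sub, sub_mul, smul_add, smul_sub, smul_smul,
    mul_smul_comm, smul_mul_assoc, mul_assoc, hA0, hA', hB0, hB', hC r s hr hs]
  match_scalars <;> ring1

lemma hW (r s : ℂ) (hr : r ≠ 0) (hs : s ≠ 0) :
    W r s = (r * s)⁻¹ • Wp r s := by
  have hP : (r * s) • W r s = Wp r s := by
    simp only [W, Wp, X2, X3, X4, mul_add, add_mul, mul_sub, sub_mul, smul_add, smul_sub,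
      smul_smul, mul_smul_comm, smul_mul_assoc, mul_assoc]
    match_scalars <;> (try field_simp; try ring1)
  rw [← hP, smul_smul, inv_mul_cancel₀ (mul_ne_zero hr hs), one_smul]

theorem stmt3 (r s : ℂ) (hr : r ≠ 0) (hs : s ≠ 0)
    (hrs : ∀ m n : ℤ, r ^ m * s ^ n = 1 → m = 0 ∧ n = 0) :
    X1 r s * W r s = (r ^ 2 * s ^ 2) • (W r s * X1 r s) + (1 - r⁻¹ * s) • (X2 r s ^ 2) ∧
    X2 r s * W r s = (s ^ 2) • (W r s * X2 r s) ∧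
    X3 r s * W r s = W r s * X3 r s ∧
    X4 r s * W r s = (s ^ 2)⁻¹ • (W r s * X4 r s) := by
  have g4 : X4 r s * W r s = (s ^ 2)⁻¹ • (W r s * X4 r s) := by
    rw [hW r s hr hs, X4, mul_smul_comm, smul_mul_assoc, ← L4 r s hr hs, smul_smul, smul_smul]
    match_scalars
    field_simp
  have g2 : X2 r s * W r s = (s ^ 2) • (W r s * X2 r s) := by
    rw [hW r s hr hs, mul_smul_comm, smul_mul_assoc, L2 r s hr hs, smul_smul, smul_smul]
    match_scalars
    field_simp
    try ring1
  have g1 : X1 r s * W r s = (r ^ 2 * s ^ 2) • (W r s * X1 r s) + (1 - r⁻¹ * s) • (X2 r s ^ 2) := by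
    rw [hW r s hr hs, X1, mul_smul_comm, smul_mul_assoc, L1 r s hr hs]
    simp only [smul_add, smul_smul]
    match_scalars <;> (try field_simp; try ring1)
  have g3 : X3 r s * W r s = W r s * X3 r s := by
    have hX3 : X3 r s = W r s - ((s ^ 2)⁻¹ - r⁻¹ * s⁻¹) • (X2 r s * X4 r s) := by
      rw [W]; module
    have key : X2 r s * (X4 r s * W r s) = W r s * (X2 r s * X4 r s) := by
      rw [g4, mul_smul_comm, ← mul_assoc, g2, smul_mul_assoc, smul_smul,
        inv_mul_cancel₀ (pow_ne_zero 2 hs), one_smul, mul_assoc]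
    rw [hX3, sub_mul, mul_sub, smul_mul_assoc, mul_smul_comm, mul_assoc, key]
  exact ⟨g1, g2, g3, g4⟩
end TwoParamB2
end
end

section
/- The decomposition of a derivation of U as an inner derivation plus a combination of the grading derivations is unique: if t ∈ U and μ1, μ2 ∈ ℂ satisfy t·e1 − e1·t + μ1·e1 = 0 and t·e2 − e2·t + μ2·e2 = 0, then μ1 = μ2 = 0 and t is a scalar multiple of the identity (so ad_t = 0). -/
/-
Applying the characters of `U` with `(e₁, e₂) ↦ (1, 0)` and `(0, 1)` to the two hypotheses gives
`μ₁ = μ₂ = 0`, so `t` commutes with `e₁` and `e₂`.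

The ordered monomials `X1^a X2^b X3^c X4^d` span `U`, and `U` acts on `V = ℂ[ℤ⁴]` so that this
monomial sends the basis vector at the origin to the basis vector at `(a, b, c, d)` (on `ℕ⁴` this
is the left regular representation in PBW coordinates). Translation in the last coordinate
commutes with the action, hence the coordinate vector `v` of an element commuting with `e₂`
satisfies `e₂ v = shift v`. Looking at a point off the `d`-axis of maximal `d`-coordinate, this
forces `r^-(2a+c) s^-(2b+c) = 1`, which genericity of `(r, s)` forbids; so `t` is a polynomial
`p(e₂)`. In the representation `e₁ ↦ E₁₀`, `e₂ ↦ diag(r²X, X)` over `ℂ[X]`, commuting with `e₁`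
becomes `p(r²X) = p(X)`, and as `r` is not a root of unity `p` is constant.
-/

noncomputable section

namespace TwoParamB2

open Polynomial

section QCommutator

variable {A : Type*} [Ring A] [Algebra ℂ A] (r s : ℂ)

def qX2 (a b : A) : A := a * b - r ^ 2 • (b * a)

def qX3 (a b : A) : A := b * qX2 r a b - (s ^ 2)⁻¹ • (qX2 r a b * b)

variable {r s}

theorem serre₁_iff (a b : A) :
    a * a * b + (r ^ 2 * s ^ 2) • (b * a * a) = (r ^ 2 + s ^ 2) • (a * b * a) ↔
      a * qX2 r a b = s ^ 2 • (qX2 r a b * a) := by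
  rw [← sub_eq_zero, ← sub_eq_zero (a := a * qX2 r a b)]
  refine Eq.congr_left ?_
  simp only [qX2, mul_sub, sub_mul, mul_smul_comm, smul_mul_assoc, smul_sub, smul_smul, mul_assoc]
  module

theorem serre₂_iff (hs : s ≠ 0) (a b : A) :
    a * b ^ 3 + (r * s * (r ^ 2 + r * s + s ^ 2)) • (b ^ 2 * a * b) =
        (r ^ 2 + r * s + s ^ 2) • (b * a * b ^ 2) + (r ^ 3 * s ^ 3) • (b ^ 3 * a) ↔
      qX3 r s a b * b = (r * s) • (b * qX3 r s a b) := by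
  rw [← sub_eq_zero, ← sub_eq_zero (a := qX3 r s a b * b)]
  have key : a * b ^ 3 + (r * s * (r ^ 2 + r * s + s ^ 2)) • (b ^ 2 * a * b) -
        ((r ^ 2 + r * s + s ^ 2) • (b * a * b ^ 2) + (r ^ 3 * s ^ 3) • (b ^ 3 * a)) =
      (-s ^ 2) • (qX3 r s a b * b - (r * s) • (b * qX3 r s a b)) := by
    simp only [qX3, qX2, pow_succ, pow_zero, one_mul, mul_sub, sub_mul, mul_smul_comm,
      smul_mul_assoc, smul_sub, smul_smul, mul_assoc]
    match_scalars <;> field_simp <;> ring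
  rw [key, smul_eq_zero, neg_eq_zero]
  simp [hs]

theorem pow_mul_eq_smul_mul_pow {x y : A} {c : ℂ} (h : y * x = c • (x * y)) (n : ℕ) :
    y ^ n * x = c ^ n • (x * y ^ n) := by
  induction n with
  | zero => simp
  | succ n ih =>
    rw [pow_succ, mul_assoc, h, mul_smul_comm, ← mul_assoc, ih, smul_mul_assoc, smul_smul,
      ← pow_succ', mul_assoc]

end QCommutator

section Lift

variable {r s : ℂ} {A : Type*} [Ring A] [Algebra ℂ A]

def lift (a b : A)
    (h₁ : a * a * b + (r ^ 2 * s ^ 2) • (b * a * a) = (r ^ 2 + s ^ 2) • (a * b * a))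
    (h₂ : a * b ^ 3 + (r * s * (r ^ 2 + r * s + s ^ 2)) • (b ^ 2 * a * b) =
      (r ^ 2 + r * s + s ^ 2) • (b * a * b ^ 2) + (r ^ 3 * s ^ 3) • (b ^ 3 * a)) :
    U r s →ₐ[ℂ] A :=
  RingQuot.liftAlgHom ℂ ⟨FreeAlgebra.lift ℂ ![a, b], fun x y h => by
    cases h <;> simpa [g1, g2]⟩

variable {a b : A} {h₁ h₂}

@[simp]
theorem lift_E1 : lift (r := r) (s := s) a b h₁ h₂ (E1 r s) = a := by
  simp [lift, E1, g1]

@[simp]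
theorem lift_E2 : lift (r := r) (s := s) a b h₁ h₂ (E2 r s) = b := by
  simp [lift, E2, g2]

theorem map_qX2 {B : Type*} [Ring B] [Algebra ℂ B] (f : A →ₐ[ℂ] B) (a b : A) :
    f (qX2 r a b) = qX2 r (f a) (f b) := by
  simp [qX2]

theorem map_qX3 {B : Type*} [Ring B] [Algebra ℂ B] (f : A →ₐ[ℂ] B) (a b : A) :
    f (qX3 r s a b) = qX3 r s (f a) (f b) := by
  simp [qX3, map_qX2]

theorem U_induction {P : U r s → Prop} (algebraMap : ∀ c, P (algebraMap ℂ (U r s) c))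
    (hE1 : P (E1 r s)) (hE2 : P (E2 r s)) (add : ∀ x y, P x → P y → P (x + y))
    (mul : ∀ x y, P x → P y → P (x * y)) (u : U r s) : P u := by
  obtain ⟨x, rfl⟩ := RingQuot.mkAlgHom_surjective ℂ (URel r s) u
  induction x using FreeAlgebra.induction with
  | grade0 c => simpa only [AlgHom.commutes] using algebraMap c
  | grade1 i => fin_cases i; exacts [hE1, hE2]
  | mul x y hx hy => simpa only [map_mul] using mul _ _ hx hy
  | add x y hx hy => simpa only [map_add] using add _ _ hx hy

end Lift

section Characters
variable {r s : ℂ}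

theorem eq_zero_of_commutator_E1_add_smul {t : U r s} {μ : ℂ}
    (h : t * E1 r s - E1 r s * t + μ • E1 r s = 0) : μ = 0 := by
  let χ : U r s →ₐ[ℂ] ℂ := lift 1 0 (by simp) (by simp)
  simpa [χ] using congrArg χ h

theorem eq_zero_of_commutator_E2_add_smul {t : U r s} {μ : ℂ}
    (h : t * E2 r s - E2 r s * t + μ • E2 r s = 0) : μ = 0 := by
  let χ : U r s →ₐ[ℂ] ℂ := lift 0 1 (by simp) (by simp)
  simpa [χ] using congrArg χ h

end Characters

section Relations

variable {r s : ℂ}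

theorem serre₁_E : E1 r s * E1 r s * E2 r s + (r ^ 2 * s ^ 2) • (E2 r s * E1 r s * E1 r s) =
    (r ^ 2 + s ^ 2) • (E1 r s * E2 r s * E1 r s) := by
  simpa only [map_add, map_mul, map_smul, E1, E2] using
    RingQuot.mkAlgHom_rel ℂ (URel.serre1 (r := r) (s := s))

theorem serre₂_E : E1 r s * E2 r s ^ 3 + (r * s * (r ^ 2 + r * s + s ^ 2)) •
      (E2 r s ^ 2 * E1 r s * E2 r s) =
    (r ^ 2 + r * s + s ^ 2) • (E2 r s * E1 r s * E2 r s ^ 2) +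
      (r ^ 3 * s ^ 3) • (E2 r s ^ 3 * E1 r s) := by
  simpa only [map_add, map_mul, map_smul, map_pow, E1, E2] using
    RingQuot.mkAlgHom_rel ℂ (URel.serre2 (r := r) (s := s))

theorem X1_mul_X2 : X1 r s * X2 r s = s ^ 2 • (X2 r s * X1 r s) :=
  (serre₁_iff _ _).mp serre₁_E

theorem X3_mul_X4 (hs : s ≠ 0) : X3 r s * X4 r s = (r * s) • (X4 r s * X3 r s) :=
  (serre₂_iff hs _ _).mp serre₂_E

theorem X2_mul_X1 (hs : s ≠ 0) : X2 r s * X1 r s = (s ^ 2)⁻¹ • (X1 r s * X2 r s) := by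
  rw [X1_mul_X2, smul_smul, inv_mul_cancel₀ (pow_ne_zero 2 hs), one_smul]

theorem X4_mul_X3 (hr : r ≠ 0) (hs : s ≠ 0) :
    X4 r s * X3 r s = (r * s)⁻¹ • (X3 r s * X4 r s) := by
  rw [X3_mul_X4 hs, smul_smul, inv_mul_cancel₀ (mul_ne_zero hr hs), one_smul]

theorem X3_mul_X1 (hr : r ≠ 0) (hs : s ≠ 0) :
    X3 r s * X1 r s = ((r * s) ^ 2)⁻¹ • (X1 r s * X3 r s) := by
  have key : X3 r s * X1 r s - ((r * s) ^ 2)⁻¹ • (X1 r s * X3 r s) =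
      E2 r s * (X2 r s * X1 r s - (s ^ 2)⁻¹ • (X1 r s * X2 r s)) -
        ((r * s) ^ 2)⁻¹ • ((X2 r s * X1 r s - (s ^ 2)⁻¹ • (X1 r s * X2 r s)) * E2 r s) := by
    simp only [X3, X2, X1, mul_sub, sub_mul, smul_sub, smul_smul, mul_smul_comm,
      smul_mul_assoc, mul_assoc]
    match_scalars <;> field_simp <;> ring
  rwa [X2_mul_X1 hs, sub_self, mul_zero, zero_mul, smul_zero, sub_zero, sub_eq_zero] at key

theorem X3_mul_X2 (hr : r ≠ 0) (hs : s ≠ 0) :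
    X3 r s * X2 r s = (r * s)⁻¹ • (X2 r s * X3 r s) := by
  have h31 := sub_eq_zero.mpr (X3_mul_X1 hr hs)
  have h34 := sub_eq_zero.mpr (X3_mul_X4 (r := r) hs)
  have key : X3 r s * X2 r s - (r * s)⁻¹ • (X2 r s * X3 r s) =
      (X3 r s * X1 r s - ((r * s) ^ 2)⁻¹ • (X1 r s * X3 r s)) * X4 r s
        + ((r * s)⁻¹ * r⁻¹ * s⁻¹) • (X1 r s * (X3 r s * X4 r s - (r * s) • (X4 r s * X3 r s)))
        - r ^ 2 • ((X3 r s * X4 r s - (r * s) • (X4 r s * X3 r s)) * X1 r s)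
        - (r ^ 3 * s) • (X4 r s * (X3 r s * X1 r s - ((r * s) ^ 2)⁻¹ • (X1 r s * X3 r s))) := by
    rw [show X2 r s = X1 r s * X4 r s - r ^ 2 • (X4 r s * X1 r s) from rfl]
    simp only [mul_sub, sub_mul, smul_sub, smul_smul, mul_smul_comm, smul_mul_assoc, mul_assoc]
    match_scalars <;> field_simp <;> ring
  rwa [h31, h34, mul_zero, zero_mul, mul_zero, zero_mul, smul_zero, smul_zero, smul_zero,
    add_zero, sub_zero, sub_zero, sub_eq_zero] at key

theorem X4_mul_X2 : X4 r s * X2 r s = X3 r s + (s ^ 2)⁻¹ • (X2 r s * X4 r s) :=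
  (sub_add_cancel _ _).symm

theorem X4_mul_X1 (hr : r ≠ 0) :
    X4 r s * X1 r s = (r ^ 2)⁻¹ • (X1 r s * X4 r s - X2 r s) := by
  rw [show X1 r s * X4 r s - X2 r s = r ^ 2 • (X4 r s * X1 r s) from sub_sub_cancel _ _,
    smul_smul, inv_mul_cancel₀ (pow_ne_zero 2 hr), one_smul]

end Relations

section PBW

variable (r s : ℂ)

def pbw (m : ℕ × ℕ × ℕ × ℕ) : U r s :=
  X1 r s ^ m.1 * X2 r s ^ m.2.1 * X3 r s ^ m.2.2.1 * X4 r s ^ m.2.2.2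

variable {r s}

local notation "𝒮" => Submodule.span ℂ (Set.range (pbw r s))

theorem pbw_mem (m : ℕ × ℕ × ℕ × ℕ) : pbw r s m ∈ 𝒮 := Submodule.subset_span ⟨m, rfl⟩

theorem mul_mem_span_pbw {g : U r s} (h : ∀ m, pbw r s m * g ∈ 𝒮) {u : U r s} (hu : u ∈ 𝒮) :
    u * g ∈ 𝒮 :=
  (Submodule.span_le (p := (𝒮).comap (LinearMap.mulRight ℂ g))).mpr
    (Set.range_subset_iff.mpr h) hu

theorem pbw_mul_X4 (a b c d : ℕ) : pbw r s (a, b, c, d) * X4 r s = pbw r s (a, b, c, d + 1) := by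
  simp only [pbw, pow_succ, mul_assoc]

theorem mul_X4_mem {u : U r s} (hu : u ∈ 𝒮) : u * X4 r s ∈ 𝒮 :=
  mul_mem_span_pbw (fun _ => pbw_mul_X4 .. ▸ pbw_mem _) hu

theorem pbw_mul_X3_mem (hr : r ≠ 0) (hs : s ≠ 0) (a b c d : ℕ) :
    pbw r s (a, b, c, d) * X3 r s ∈ 𝒮 := by
  induction d with
  | zero => simpa [pbw, pow_succ, mul_assoc] using pbw_mem (r := r) (s := s) (a, b, c + 1, 0)
  | succ d ih =>
    rw [← pbw_mul_X4, mul_assoc, X4_mul_X3 hr hs, mul_smul_comm, ← mul_assoc]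
    exact Submodule.smul_mem _ _ (mul_X4_mem ih)

theorem pbw_mul_X2_mem (hr : r ≠ 0) (hs : s ≠ 0) (a b c d : ℕ) :
    pbw r s (a, b, c, d) * X2 r s ∈ 𝒮 := by
  induction d with
  | zero =>
    have h : pbw r s (a, b, c, 0) * X2 r s = ((r * s)⁻¹) ^ c • pbw r s (a, b + 1, c, 0) := by
      simp only [pbw, pow_zero, mul_one, mul_assoc, pow_mul_eq_smul_mul_pow (X3_mul_X2 hr hs),
        mul_smul_comm, pow_succ]
    exact h ▸ Submodule.smul_mem _ _ (pbw_mem _)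
  | succ d ih =>
    rw [← pbw_mul_X4, mul_assoc, X4_mul_X2, mul_add, mul_smul_comm, ← mul_assoc]
    exact add_mem (pbw_mul_X3_mem hr hs a b c d) (Submodule.smul_mem _ _ (mul_X4_mem ih))

theorem pbw_mul_X1_mem (hr : r ≠ 0) (hs : s ≠ 0) (a b c d : ℕ) :
    pbw r s (a, b, c, d) * X1 r s ∈ 𝒮 := by
  induction d with
  | zero =>
    have h : pbw r s (a, b, c, 0) * X1 r s =
        ((((r * s) ^ 2)⁻¹) ^ c * ((s ^ 2)⁻¹) ^ b) • pbw r s (a + 1, b, c, 0) := by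
      simp only [pbw, pow_zero, mul_one, mul_assoc, pow_mul_eq_smul_mul_pow (X3_mul_X1 hr hs),
        mul_smul_comm]
      rw [← mul_assoc (X2 r s ^ b), pow_mul_eq_smul_mul_pow (X2_mul_X1 hs)]
      simp only [smul_mul_assoc, mul_smul_comm, smul_smul, mul_assoc, pow_succ]
    exact h ▸ Submodule.smul_mem _ _ (pbw_mem _)
  | succ d ih =>
    rw [← pbw_mul_X4, mul_assoc, X4_mul_X1 hr, mul_smul_comm, mul_sub, ← mul_assoc]
    exact Submodule.smul_mem _ _ (sub_mem (mul_X4_mem ih) (pbw_mul_X2_mem hr hs a b c d))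

theorem span_pbw_eq_top (hr : r ≠ 0) (hs : s ≠ 0) : 𝒮 = ⊤ := by
  have key : ∀ x : U r s, ∀ u ∈ 𝒮, u * x ∈ 𝒮 := by
    refine U_induction (fun c u hu => ?_)
      (fun u => mul_mem_span_pbw fun ⟨a, b, c, d⟩ => pbw_mul_X1_mem hr hs a b c d)
      (fun _ => mul_X4_mem)
      (fun x y hx hy u hu => mul_add u x y ▸ add_mem (hx u hu) (hy u hu))
      (fun x y hx hy u hu => mul_assoc u x y ▸ hy _ (hx u hu))
    rw [Algebra.algebraMap_eq_smul_one, mul_smul_one]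
    exact Submodule.smul_mem _ c hu
  refine eq_top_iff.mpr fun x _ => ?_
  simpa using key x 1 (by simpa [pbw] using pbw_mem (r := r) (s := s) 0)

end PBW

section Representation

/-- `vec a b c d` stands for `X1^a X2^b X3^c X4^d`: on `ℕ⁴`, `opE1` and `opE2` below are left
multiplication by `e₁` and `e₂` in these coordinates, and `pCoeff 0 = qCoeff 0 = 0` keeps `ℕ⁴`
invariant. -/
abbrev V : Type := (ℤ × ℤ × ℤ × ℤ) →₀ ℂ

def vec (x y z w : ℤ) : V := Finsupp.single (x, y, z, w) 1

theorem ext_vec {f g : Module.End ℂ V} (h : ∀ x y z w, f (vec x y z w) = g (vec x y z w)) :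
    f = g :=
  Finsupp.basisSingleOne.ext fun ⟨x, y, z, w⟩ => by simpa [vec] using h x y z w

def shift (δ : ℤ × ℤ × ℤ × ℤ) : Module.End ℂ V := Finsupp.lmapDomain ℂ ℂ (· + δ)

theorem shift_vec (a b c d x y z w : ℤ) :
    shift (a, b, c, d) (vec x y z w) = vec (x + a) (y + b) (z + c) (w + d) := by
  simp [shift, vec, Finsupp.mapDomain_single]

theorem shift_apply (δ : ℤ × ℤ × ℤ × ℤ) (v : V) (q : ℤ × ℤ × ℤ × ℤ) :
    shift δ v q = v (q - δ) := by
  simpa [shift] using Finsupp.mapDomain_apply (add_left_injective δ) v (q - δ)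

/-- `t ^ (-x)`, kept as an atom so that `field_simp` and `ring` only meet shifted exponents
through `powNeg_add_one` and `powNeg_sub_one`. -/
def powNeg (t : ℂ) (x : ℤ) : ℂ := t ^ (-x)

@[simp]
theorem powNeg_zero (t : ℂ) : powNeg t 0 = 1 := by simp [powNeg]

theorem powNeg_add_one {t : ℂ} (ht : t ≠ 0) (x : ℤ) : powNeg t (x + 1) = t⁻¹ * powNeg t x := by
  rw [powNeg, powNeg, neg_add, zpow_add₀ ht, zpow_neg_one, mul_comm]

theorem powNeg_sub_one {t : ℂ} (ht : t ≠ 0) (x : ℤ) : powNeg t (x - 1) = t * powNeg t x := by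
  rw [powNeg, powNeg, neg_sub, sub_eq_add_neg, zpow_add₀ ht, zpow_one, mul_comm]

variable (r s : ℂ)

def pCoeff (x : ℤ) : ℂ := s ^ 2 * (powNeg s x ^ 2 - powNeg r x ^ 2) / (r ^ 2 - s ^ 2)

def qCoeff (y : ℤ) : ℂ := r * s ^ 2 * (powNeg s y ^ 2 - powNeg r y * powNeg s y) / (r - s)

def dCoeff (x y z : ℤ) : ℂ := powNeg r x ^ 2 * powNeg s y ^ 2 * powNeg r z * powNeg s z

def opE1 : Module.End ℂ V := shift (1, 0, 0, 0)

def opE2 : Module.End ℂ V :=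
  Finsupp.lsum ℂ fun q => LinearMap.toSpanSingleton ℂ V <|
    (-pCoeff r s q.1) • vec (q.1 - 1) (q.2.1 + 1) q.2.2.1 q.2.2.2 +
    (powNeg r q.1 ^ 2 * qCoeff r s q.2.1) • vec q.1 (q.2.1 - 1) (q.2.2.1 + 1) q.2.2.2 +
    dCoeff r s q.1 q.2.1 q.2.2.1 • vec q.1 q.2.1 q.2.2.1 (q.2.2.2 + 1)

variable {r s}

theorem opE1_vec (x y z w : ℤ) : opE1 (vec x y z w) = vec (x + 1) y z w := by
  simp [opE1, shift_vec]

theorem opE2_vec (x y z w : ℤ) :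
    opE2 r s (vec x y z w) =
      (-pCoeff r s x) • vec (x - 1) (y + 1) z w +
      (powNeg r x ^ 2 * qCoeff r s y) • vec x (y - 1) (z + 1) w +
      dCoeff r s x y z • vec x y z (w + 1) := by
  simp [opE2, vec]

theorem qX2_opE_vec (hr : r ≠ 0) (hs : s ≠ 0) (hrs₂ : r ^ 2 - s ^ 2 ≠ 0) (x y z w : ℤ) :
    qX2 r opE1 (opE2 r s) (vec x y z w) = powNeg s x ^ 2 • vec x (y + 1) z w := by
  simp only [qX2, LinearMap.sub_apply, Module.End.mul_apply, LinearMap.smul_apply, opE1_vec,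
    opE2_vec, map_add, map_smul, sub_add_cancel, add_sub_cancel_right, pCoeff, dCoeff,
    powNeg_add_one hr, powNeg_add_one hs]
  match_scalars <;> field_simp <;> ring

theorem qX3_opE_vec (hr : r ≠ 0) (hs : s ≠ 0) (hrs₂ : r ^ 2 - s ^ 2 ≠ 0) (hrs₁ : r - s ≠ 0)
    (x y z w : ℤ) :
    qX3 r s opE1 (opE2 r s) (vec x y z w) =
      (powNeg r x ^ 2 * powNeg s x ^ 2 * powNeg r y * powNeg s y) • vec x y (z + 1) w := by
  simp only [qX3, LinearMap.sub_apply, Module.End.mul_apply, LinearMap.smul_apply, opE2_vec,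
    qX2_opE_vec hr hs hrs₂, map_add, map_smul, sub_add_cancel, add_sub_cancel_right, qCoeff,
    dCoeff, powNeg_add_one hr, powNeg_add_one hs, powNeg_sub_one hs]
  match_scalars <;> field_simp <;> ring

theorem opE1_mul_qX2 (hr : r ≠ 0) (hs : s ≠ 0) (hrs₂ : r ^ 2 - s ^ 2 ≠ 0) :
    opE1 * qX2 r opE1 (opE2 r s) = s ^ 2 • (qX2 r opE1 (opE2 r s) * opE1) := by
  refine ext_vec fun x y z w => ?_
  simp only [Module.End.mul_apply, LinearMap.smul_apply, qX2_opE_vec hr hs hrs₂, opE1_vec,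
    map_smul, smul_smul, powNeg_add_one hs]
  match_scalars
  field_simp

theorem qX3_mul_opE2 (hr : r ≠ 0) (hs : s ≠ 0) (hrs₂ : r ^ 2 - s ^ 2 ≠ 0) (hrs₁ : r - s ≠ 0) :
    qX3 r s opE1 (opE2 r s) * opE2 r s = (r * s) • (opE2 r s * qX3 r s opE1 (opE2 r s)) := by
  refine ext_vec fun x y z w => ?_
  simp only [Module.End.mul_apply, LinearMap.smul_apply, opE2_vec, qX3_opE_vec hr hs hrs₂ hrs₁,
    map_add, map_smul, qCoeff, pCoeff, dCoeff, powNeg_add_one hr, powNeg_add_one hs,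
    powNeg_sub_one hr, powNeg_sub_one hs]
  match_scalars <;> field_simp

theorem opE1_commute_shift : Commute opE1 (shift (0, 0, 0, 1)) :=
  ext_vec fun x y z w => by simp [opE1, shift_vec]

theorem opE2_commute_shift : Commute (opE2 r s) (shift (0, 0, 0, 1)) :=
  ext_vec fun x y z w => by simp [opE2_vec, shift_vec]

end Representation

section Orbit
variable {r s : ℂ}

theorem pow_apply_of_apply_eq {f : Module.End ℂ V} {g : ℤ → V} (h : ∀ k, f (g k) = g (k + 1))
    (n : ℕ) (k : ℤ) : (f ^ n) (g k) = g (k + n) := by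
  induction n with
  | zero => simp
  | succ n ih => rw [pow_succ', Module.End.mul_apply, ih, h]; push_cast; ring_nf

def toInt4 (m : ℕ × ℕ × ℕ × ℕ) : ℤ × ℤ × ℤ × ℤ := (m.1, m.2.1, m.2.2.1, m.2.2.2)

theorem toInt4_injective : Function.Injective toInt4 := by
  rintro ⟨a, b, c, d⟩ ⟨a', b', c', d'⟩ h
  simp_all [toInt4]

theorem rep_pbw_vec (hr : r ≠ 0) (hs : s ≠ 0) (hrs₂ : r ^ 2 - s ^ 2 ≠ 0) (hrs₁ : r - s ≠ 0)
    {ρ : U r s →ₐ[ℂ] Module.End ℂ V} (hρ₁ : ρ (E1 r s) = opE1) (hρ₂ : ρ (E2 r s) = opE2 r s)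
    (m : ℕ × ℕ × ℕ × ℕ) :
    ρ (pbw r s m) (vec 0 0 0 0) = Finsupp.single (toInt4 m) 1 := by
  have hX2 : ρ (X2 r s) = qX2 r opE1 (opE2 r s) := by
    rw [← hρ₁, ← hρ₂, ← map_qX2]; rfl
  have hX3 : ρ (X3 r s) = qX3 r s opE1 (opE2 r s) := by
    rw [← hρ₁, ← hρ₂, ← map_qX3]; rfl
  obtain ⟨a, b, c, d⟩ := m
  simp only [pbw, map_mul, map_pow, Module.End.mul_apply, X1, X4, hρ₁, hρ₂, hX2, hX3]
  rw [pow_apply_of_apply_eq (g := fun k => vec 0 0 0 k)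
      (fun k => by simp [opE2_vec, pCoeff, qCoeff, dCoeff]),
    pow_apply_of_apply_eq (g := fun k => vec 0 0 k _)
      (fun k => by simp [qX3_opE_vec hr hs hrs₂ hrs₁]),
    pow_apply_of_apply_eq (g := fun k => vec 0 k _ _) (fun k => by simp [qX2_opE_vec hr hs hrs₂]),
    pow_apply_of_apply_eq (g := fun k => vec k _ _ _) (fun k => opE1_vec ..)]
  simp [vec, toInt4]

end Orbit

section Axis
variable {r s : ℂ}

theorem opE2_apply (v : V) (a b c d : ℤ) :
    opE2 r s v (a, b, c, d) =
      -pCoeff r s (a + 1) * v (a + 1, b - 1, c, d) +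
      powNeg r a ^ 2 * qCoeff r s (b + 1) * v (a, b + 1, c - 1, d) +
      dCoeff r s a b c * v (a, b, c, d - 1) := by
  induction v using Finsupp.induction_linear with
  | zero => simp
  | add v w hv hw => simp only [map_add, Finsupp.add_apply, hv, hw]; ring
  | single q x =>
    obtain ⟨x', y', z', w'⟩ := q
    rw [show Finsupp.single (x', y', z', w') x = x • vec x' y' z' w' by simp [vec], map_smul,
      opE2_vec]
    simp only [vec, Finsupp.smul_apply, Finsupp.add_apply, Finsupp.smul_single,
      Finsupp.single_apply, Prod.mk.injEq, smul_eq_mul]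
    split_ifs <;> grind

theorem dCoeff_ne_one (hr : r ≠ 0) (hs : s ≠ 0)
    (hrs : ∀ m n : ℤ, r ^ m * s ^ n = 1 → m = 0 ∧ n = 0) {a b c : ℤ} (ha : 0 ≤ a)
    (hc : 0 ≤ c) (habc : ¬(a = 0 ∧ b = 0 ∧ c = 0)) : dCoeff r s a b c ≠ 1 := by
  intro h
  have := hrs (-(2 * a + c)) (-(2 * b + c)) (by
    rw [← h, dCoeff, powNeg, powNeg, powNeg, powNeg, ← zpow_natCast, ← zpow_natCast,
      ← zpow_mul, ← zpow_mul, show -(2 * a + c) = -a * (2 : ℕ) + -c by push_cast; ring,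
      show -(2 * b + c) = -b * (2 : ℕ) + -c by push_cast; ring, zpow_add₀ hr, zpow_add₀ hs]
    ring)
  omega

theorem eq_axis_of_opE2_eq_shift (hr : r ≠ 0) (hs : s ≠ 0)
    (hrs : ∀ m n : ℤ, r ^ m * s ^ n = 1 → m = 0 ∧ n = 0) {v : V}
    (hv : ∀ q, v q ≠ 0 → 0 ≤ q.1 ∧ 0 ≤ q.2.1 ∧ 0 ≤ q.2.2.1)
    (h : opE2 r s v = shift (0, 0, 0, 1) v) :
    ∀ q, v q ≠ 0 → q.1 = 0 ∧ q.2.1 = 0 ∧ q.2.2.1 = 0 := by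
  classical
  by_contra! hex
  obtain ⟨q₀, hq₀, hq₀'⟩ := hex
  set S := v.support.filter fun q => ¬(q.1 = 0 ∧ q.2.1 = 0 ∧ q.2.2.1 = 0)
  -- a point off the axis with maximal last coordinate cannot exist
  obtain ⟨⟨a, b, c, d⟩, hq, hmax⟩ :=
    S.exists_max_image (fun q => q.2.2.2) ⟨q₀, by simpa [S, hq₀] using hq₀'⟩
  simp only [S, Finset.mem_filter, Finsupp.mem_support_iff] at hq hmax
  obtain ⟨ha, hb, hc⟩ : 0 ≤ a ∧ 0 ≤ b ∧ 0 ≤ c := hv _ hq.1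
  have h₁ : v (a + 1, b - 1, c, d + 1) = 0 := by
    by_contra h'
    have : d + 1 ≤ d := hmax _ ⟨h', by dsimp only; omega⟩
    omega
  have h₂ : v (a, b + 1, c - 1, d + 1) = 0 := by
    by_contra h'
    have : d + 1 ≤ d := hmax _ ⟨h', by dsimp only; omega⟩
    omega
  have key := DFunLike.congr_fun h (a, b, c, d + 1)
  rw [opE2_apply, shift_apply, h₁, h₂] at key
  simp only [mul_zero, zero_add, add_sub_cancel_right, Prod.mk_sub_mk, sub_zero] at key
  exact dCoeff_ne_one hr hs hrs ha hc hq.2 (mul_right_cancel₀ hq.1 (key.trans (one_mul _).symm))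

end Axis

section Centralizer
variable {r s : ℂ}

theorem pow_sub_pow_ne_zero (hs : s ≠ 0) (hrs : ∀ m n : ℤ, r ^ m * s ^ n = 1 → m = 0 ∧ n = 0)
    {k : ℕ} (hk : k ≠ 0) : r ^ k - s ^ k ≠ 0 := by
  intro h
  have := hrs k (-k) (by
    rw [zpow_neg, zpow_natCast, zpow_natCast, sub_eq_zero.mp h, mul_inv_cancel₀ (pow_ne_zero k hs)])
  omega

theorem exists_rep (hr : r ≠ 0) (hs : s ≠ 0) (hrs₂ : r ^ 2 - s ^ 2 ≠ 0) (hrs₁ : r - s ≠ 0) :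
    ∃ ρ : U r s →ₐ[ℂ] Module.End ℂ V, ρ (E1 r s) = opE1 ∧ ρ (E2 r s) = opE2 r s :=
  ⟨lift opE1 (opE2 r s) ((serre₁_iff _ _).mpr (opE1_mul_qX2 hr hs hrs₂))
    ((serre₂_iff hs _ _).mpr (qX3_mul_opE2 hr hs hrs₂ hrs₁)), lift_E1, lift_E2⟩

theorem rep_commute_shift {ρ : U r s →ₐ[ℂ] Module.End ℂ V} (hρ₁ : ρ (E1 r s) = opE1)
    (hρ₂ : ρ (E2 r s) = opE2 r s) (u : U r s) : Commute (ρ u) (shift (0, 0, 0, 1)) := by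
  induction u using U_induction with
  | algebraMap c => simpa using Algebra.commute_algebraMap_left c _
  | hE1 => exact hρ₁ ▸ opE1_commute_shift
  | hE2 => exact hρ₂ ▸ opE2_commute_shift
  | add x y hx hy => exact map_add ρ x y ▸ hx.add_left hy
  | mul x y hx hy => exact map_mul ρ x y ▸ hx.mul_left hy

theorem rep_linearCombination_pbw (hr : r ≠ 0) (hs : s ≠ 0) (hrs₂ : r ^ 2 - s ^ 2 ≠ 0)
    (hrs₁ : r - s ≠ 0) {ρ : U r s →ₐ[ℂ] Module.End ℂ V} (hρ₁ : ρ (E1 r s) = opE1)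
    (hρ₂ : ρ (E2 r s) = opE2 r s) (c : (ℕ × ℕ × ℕ × ℕ) →₀ ℂ) :
    ρ (Finsupp.linearCombination ℂ (pbw r s) c) (vec 0 0 0 0) = Finsupp.mapDomain toInt4 c := by
  induction c using Finsupp.induction_linear with
  | zero => simp
  | add c d hc hd => simp [Finsupp.mapDomain_add, hc, hd]
  | single m a =>
    simp [rep_pbw_vec hr hs hrs₂ hrs₁ hρ₁ hρ₂, Finsupp.mapDomain_single]

theorem rep_apply_eq_shift_of_commute {ρ : U r s →ₐ[ℂ] Module.End ℂ V}
    (hρ₁ : ρ (E1 r s) = opE1) (hρ₂ : ρ (E2 r s) = opE2 r s) {t : U r s}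
    (ht : Commute t (E2 r s)) :
    opE2 r s (ρ t (vec 0 0 0 0)) = shift (0, 0, 0, 1) (ρ t (vec 0 0 0 0)) := by
  have h0 : opE2 r s (vec 0 0 0 0) = shift (0, 0, 0, 1) (vec 0 0 0 0) := by
    simp [opE2_vec, shift_vec, pCoeff, qCoeff, dCoeff]
  rw [← hρ₂, ← Module.End.mul_apply, ← map_mul, ← ht.eq, map_mul, Module.End.mul_apply, hρ₂,
    h0, ← Module.End.mul_apply, (rep_commute_shift hρ₁ hρ₂ t).eq, Module.End.mul_apply]

theorem exists_aeval_E2_eq_of_commute (hr : r ≠ 0) (hs : s ≠ 0)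
    (hrs : ∀ m n : ℤ, r ^ m * s ^ n = 1 → m = 0 ∧ n = 0) {t : U r s}
    (ht : Commute t (E2 r s)) : ∃ p : ℂ[X], t = aeval (E2 r s) p := by
  have hrs₂ := pow_sub_pow_ne_zero hs hrs two_ne_zero
  have hrs₁ : r - s ≠ 0 := by simpa using pow_sub_pow_ne_zero hs hrs one_ne_zero
  obtain ⟨ρ, hρ₁, hρ₂⟩ := exists_rep hr hs hrs₂ hrs₁
  obtain ⟨c, rfl⟩ : ∃ c, Finsupp.linearCombination ℂ (pbw r s) c = t := by
    rw [← LinearMap.mem_range, Finsupp.range_linearCombination, span_pbw_eq_top hr hs]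
    trivial
  have hv := rep_linearCombination_pbw hr hs hrs₂ hrs₁ hρ₁ hρ₂ c
  set t := Finsupp.linearCombination ℂ (pbw r s) c
  set v := ρ t (vec 0 0 0 0)
  have hsupp : ∀ q, v q ≠ 0 → 0 ≤ q.1 ∧ 0 ≤ q.2.1 ∧ 0 ≤ q.2.2.1 := by
    intro q hq
    obtain ⟨m, rfl⟩ := Finsupp.mem_range_of_mapDomain_ne_zero (hv ▸ hq)
    simp [toInt4]
  have hop := rep_apply_eq_shift_of_commute hρ₁ hρ₂ ht
  have hc : c ∈ Finsupp.supported ℂ ℂ {m | m.1 = 0 ∧ m.2.1 = 0 ∧ m.2.2.1 = 0} := by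
    intro m hm
    simpa [toInt4] using eq_axis_of_opE2_eq_shift hr hs hrs hsupp hop (toInt4 m)
      (by rwa [hv, Finsupp.mapDomain_apply toInt4_injective, ← Finsupp.mem_support_iff])
  have hle : Submodule.span ℂ (pbw r s '' {m | m.1 = 0 ∧ m.2.1 = 0 ∧ m.2.2.1 = 0}) ≤
      LinearMap.range (aeval (E2 r s)).toLinearMap := by
    refine Submodule.span_le.mpr ?_
    rintro _ ⟨⟨a, b, c, d⟩, ⟨rfl, rfl, rfl⟩, rfl⟩
    exact ⟨X ^ d, by simp [pbw, X4]⟩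
  obtain ⟨p, hp⟩ := hle ((Finsupp.mem_span_image_iff_linearCombination ℂ).mpr ⟨c, hc, rfl⟩)
  exact ⟨p, hp.symm⟩

end Centralizer

section Commutant
variable {r s : ℂ}

theorem eq_C_of_commute_E1 (hs : s ≠ 0) (hrs : ∀ m n : ℤ, r ^ m * s ^ n = 1 → m = 0 ∧ n = 0)
    {p : ℂ[X]} (h : Commute (aeval (E2 r s) p) (E1 r s)) : p = C (p.coeff 0) := by
  -- a two-dimensional representation over `ℂ[X]` in which `e₁ e₂ = r² e₂ e₁`
  set a : Matrix (Fin 2) (Fin 2) ℂ[X] := Matrix.single 1 0 1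
  set d : Fin 2 → ℂ[X] := ![C (r ^ 2) * X, X]
  have hqX2 : qX2 r a (Matrix.diagonal d) = 0 := by
    ext i j
    fin_cases i <;> fin_cases j <;>
      simp [qX2, a, d, Matrix.mul_apply, Fin.sum_univ_two, smul_eq_C_mul]
  set σ := lift (r := r) (s := s) a (Matrix.diagonal d) ((serre₁_iff _ _).mpr (by simp [hqX2]))
    ((serre₂_iff hs _ _).mpr (by simp [qX3, hqX2]))
  have hσ : σ (aeval (E2 r s) p) = Matrix.diagonal fun i => aeval (d i) p := by
    rw [← aeval_algHom_apply, lift_E2, show Matrix.diagonal d = Matrix.diagonalAlgHom ℂ d from rfl,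
      aeval_algHom_apply, aeval_pi_apply]
    rfl
  have hcomp : p.comp (C (r ^ 2) * X) = p := by
    have := congr_fun₂ (h.map σ).eq 1 0
    rw [hσ, lift_E1] at this
    simpa [a, d, Matrix.mul_apply, Fin.sum_univ_two, comp_eq_aeval] using this.symm
  ext (_ | n)
  · simp
  have hn : p.coeff (n + 1) * ((r ^ 2) ^ (n + 1) - 1) = 0 := by
    have := congrArg (coeff · (n + 1)) hcomp
    rw [comp_C_mul_X_coeff] at this
    linear_combination this
  have hne : (r ^ 2) ^ (n + 1) - 1 ≠ 0 := by
    intro h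
    have := hrs (2 * (n + 1)) 0 (by
      rw [zpow_zero, mul_one, zpow_mul, zpow_ofNat, ← sub_eq_zero]
      exact_mod_cast h)
    omega
  simpa [hne] using hn

end Commutant

theorem stmt7 (r s : ℂ) (hr : r ≠ 0) (hs : s ≠ 0)
    (hrs : ∀ m n : ℤ, r ^ m * s ^ n = 1 → m = 0 ∧ n = 0)
    (t : U r s) (μ1 μ2 : ℂ)
    (h1 : t * E1 r s - E1 r s * t + μ1 • E1 r s = 0)
    (h2 : t * E2 r s - E2 r s * t + μ2 • E2 r s = 0) :
    μ1 = 0 ∧ μ2 = 0 ∧ ∃ c : ℂ, t = algebraMap ℂ (U r s) c := by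
  obtain rfl := eq_zero_of_commutator_E1_add_smul h1
  obtain rfl := eq_zero_of_commutator_E2_add_smul h2
  refine ⟨rfl, rfl, ?_⟩
  obtain ⟨p, rfl⟩ := exists_aeval_E2_eq_of_commute hr hs hrs (sub_eq_zero.mp (by simpa using h2))
  rw [eq_C_of_commute_E1 (p := p) hs hrs (sub_eq_zero.mp (by simpa using h1)), aeval_C]
  exact ⟨_, rfl⟩

end TwoParamB2
end
end
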